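/- Let R be a nontrivial commutative ring and let M be an R-module admitting two finite free resolutions 0 → F_n → ⋯ → F_0 → M → 0 and 0 → G_m → ⋯ → G_0 → M → 0 by finitely generated free modules of ranks r_i and s_j respectively. Then the alternating sums agree: Σ_{i=0}^{n} (−1)^i r_i = Σ_{j=0}^{m} (−1)^j s_j. -/

import Mathlib

/-!
Since `η` is surjective, every `F i` is projective and `G` is exact, the identity of `M` lifts
degree by degree to a chain map `φ : F → G`. Its mapping cone
`G 0 ← F 0 × G 1 ← F 1 × G 2 ← ⋯` is bounded, consists of finite free modules, and is exact
(in degrees `0` and `1` thanks to the augmentations `ε`, `η`); its Euler characteristic is the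
alternating rank sum of `G` minus that of `F`.

A bounded exact complex `⋯ → C 1 → C 0 → 0` of finite free modules has Euler characteristic
zero: a section `σ` of `D 0 : C 1 → C 0` makes `⋯ → C 3 → C 2 × C 0 → C 1 → 0`, with the
map `(D 1, σ)` at the bottom, exact. This complex is again free, one term shorter, and its Euler
characteristic is the negative of the original one.
-/

open Module LinearMap Function

universe v

section EulerCharacteristic

variable {R : Type*} [Ring R] {C : ℕ → Type v}

variable (C) in
def splitBottom : ℕ → Type v
  | 0 => C 1
  | 1 => C 2 × C 0
  | k + 2 => C (k + 3)

variable [∀ i, AddCommGroup (C i)] [∀ i, Module R (C i)]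

instance splitBottom.instAddCommGroup : ∀ k, AddCommGroup (splitBottom C k)
  | 0 => inferInstanceAs (AddCommGroup (C 1))
  | 1 => inferInstanceAs (AddCommGroup (C 2 × C 0))
  | k + 2 => inferInstanceAs (AddCommGroup (C (k + 3)))

instance splitBottom.instModule : ∀ k, Module R (splitBottom C k)
  | 0 => inferInstanceAs (Module R (C 1))
  | 1 => inferInstanceAs (Module R (C 2 × C 0))
  | k + 2 => inferInstanceAs (Module R (C (k + 3)))

instance splitBottom.instFree [∀ i, Free R (C i)] : ∀ k, Free R (splitBottom C k)
  | 0 => inferInstanceAs (Free R (C 1))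
  | 1 => inferInstanceAs (Free R (C 2 × C 0))
  | k + 2 => inferInstanceAs (Free R (C (k + 3)))

instance splitBottom.instFinite [∀ i, Module.Finite R (C i)] :
    ∀ k, Module.Finite R (splitBottom C k)
  | 0 => inferInstanceAs (Module.Finite R (C 1))
  | 1 => inferInstanceAs (Module.Finite R (C 2 × C 0))
  | k + 2 => inferInstanceAs (Module.Finite R (C (k + 3)))

variable (D : ∀ i, C (i + 1) →ₗ[R] C i) (σ : C 0 →ₗ[R] C 1)

def splitBottomD : ∀ k, splitBottom C (k + 1) →ₗ[R] splitBottom C k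
  | 0 => coprod (D 1) σ
  | 1 => (D 2).prod 0
  | k + 2 => D (k + 3)

variable {D σ}

theorem splitBottomD_zero_surjective (hD : Exact (D 1) (D 0)) (hσ : ∀ x, D 0 (σ x) = x) :
    Surjective (splitBottomD D σ 0) := by
  intro (y : C 1)
  obtain ⟨x, hx⟩ := (hD (y - σ (D 0 y))).mp (by rw [map_sub, hσ, sub_self])
  exact ⟨(x, D 0 y), show D 1 x + σ (D 0 y) = y by rw [hx, sub_add_cancel]⟩

theorem exact_splitBottomD (hD : ∀ i, Exact (D (i + 1)) (D i)) (hσ : ∀ x, D 0 (σ x) = x) :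
    ∀ k, Exact (splitBottomD D σ (k + 1)) (splitBottomD D σ k)
  | 0 => fun ⟨x, y⟩ => by
    change D 1 x + σ y = 0 ↔ ∃ z, (D 2 z, (0 : C 0)) = (x, y)
    constructor
    · intro hxy
      have hy : y = 0 := by
        simpa only [map_add, (hD 0).apply_apply_eq_zero, hσ, zero_add, map_zero]
          using congrArg (D 0) hxy
      subst hy
      obtain ⟨z, hz⟩ := (hD 1 x).mp (by rwa [map_zero, add_zero] at hxy)
      exact ⟨z, by rw [hz]⟩
    · rintro ⟨z, hz⟩
      obtain ⟨rfl, rfl⟩ := Prod.ext_iff.mp hz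
      rw [(hD 1).apply_apply_eq_zero, map_zero, add_zero]
  | 1 => fun x => by
    change (D 2 x, (0 : C 0)) = 0 ↔ ∃ z, D 3 z = x
    rw [Prod.mk_eq_zero, and_iff_left rfl]
    exact hD 2 x
  | k + 2 => hD (k + 3)

theorem finrank_splitBottom_one [StrongRankCondition R] [∀ i, Free R (C i)]
    [∀ i, Module.Finite R (C i)] :
    finrank R (splitBottom C 1) = finrank R (C 2) + finrank R (C 0) :=
  finrank_prod

theorem sum_alternating_finrank_eq_zero_of_exact [StrongRankCondition R] [∀ i, Free R (C i)]
    [∀ i, Module.Finite R (C i)] (N : ℕ) (D : ∀ i, C (i + 1) →ₗ[R] C i)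
    (hC : ∀ i, N + 1 < i → Subsingleton (C i)) (hD₀ : Surjective (D 0))
    (hD : ∀ i, Exact (D (i + 1)) (D i)) :
    ∑ i ∈ Finset.range (N + 2), (-1 : ℤ) ^ i * finrank R (C i) = 0 := by
  induction N generalizing C with
  | zero =>
    have := hC 2 (by omega)
    have hinj : Injective (D 0) := by
      rw [← ker_eq_bot, (hD 0).linearMap_ker_eq, range_eq_bot]
      exact Subsingleton.elim _ _
    rw [Finset.sum_range_succ, Finset.sum_range_one,
      (LinearEquiv.ofBijective (D 0) ⟨hinj, hD₀⟩).finrank_eq]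
    ring
  | succ N ih =>
    obtain ⟨σ, hσ⟩ := (D 0).exists_rightInverse_of_surjective (range_eq_top.mpr hD₀)
    have hσ' (x : C 0) : D 0 (σ x) = x := LinearMap.congr_fun hσ x
    have hbound : ∀ k, N + 1 < k → Subsingleton (splitBottom C k)
      | k + 2, h => hC (k + 3) (by omega)
    have hsplit := ih (splitBottomD D σ) hbound
      (splitBottomD_zero_surjective (hD 0) hσ') (exact_splitBottomD hD hσ')
    rw [Finset.sum_range_succ', Finset.sum_range_succ', finrank_splitBottom_one] at hsplit
    rw [Finset.sum_range_succ', Finset.sum_range_succ', Finset.sum_range_succ']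
    have hneg : ∑ k ∈ Finset.range N, (-1 : ℤ) ^ (k + 2) * finrank R (splitBottom C (k + 2)) =
        -∑ k ∈ Finset.range N, (-1 : ℤ) ^ (k + 3) * finrank R (C (k + 3)) := by
      rw [← Finset.sum_neg_distrib]
      refine Finset.sum_congr rfl fun k _ => ?_
      change _ * (finrank R (C (k + 3)) : ℤ) = _
      rw [pow_succ _ (k + 2)]
      ring
    have hzero : finrank R (splitBottom C 0) = finrank R (C 1) := rfl
    rw [hneg, hzero] at hsplit
    push_cast at hsplit
    linear_combination -hsplit

end EulerCharacteristic

section Lifting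

variable {R : Type*} [Ring R] {P A B : Type*} [AddCommGroup P] [Module R P] [Projective R P]
  [AddCommGroup A] [Module R A] [AddCommGroup B] [Module R B]

theorem Module.Projective.exists_comp_eq_of_range_le (f : A →ₗ[R] B) {g : P →ₗ[R] B}
    (h : range g ≤ range f) : ∃ l : P →ₗ[R] A, f ∘ₗ l = g := by
  obtain ⟨l, hl⟩ := projective_lifting_property f.rangeRestrict
    (g.codRestrict _ fun x => h ⟨x, rfl⟩) f.surjective_rangeRestrict
  exact ⟨l, LinearMap.ext fun x => congrArg Subtype.val (LinearMap.congr_fun hl x)⟩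

open Classical in
noncomputable def liftAlong (f : A →ₗ[R] B) (g : P →ₗ[R] B) : P →ₗ[R] A :=
  if h : range g ≤ range f then (Projective.exists_comp_eq_of_range_le f h).choose else 0

theorem comp_liftAlong {f : A →ₗ[R] B} {g : P →ₗ[R] B} (h : range g ≤ range f) :
    f ∘ₗ liftAlong f g = g := by
  rw [liftAlong, dif_pos h]
  exact (Projective.exists_comp_eq_of_range_le f h).choose_spec

end Lifting

section Comparison

variable {R : Type*} [Ring R] {M : Type*} [AddCommGroup M] [Module R M]
  {P Q : ℕ → Type*} [∀ i, AddCommGroup (P i)] [∀ i, Module R (P i)] [∀ i, Projective R (P i)]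
  [∀ i, AddCommGroup (Q i)] [∀ i, Module R (Q i)]
  (d : ∀ i, P (i + 1) →ₗ[R] P i) (ε : P 0 →ₗ[R] M) (e : ∀ i, Q (i + 1) →ₗ[R] Q i)
  (η : Q 0 →ₗ[R] M)

noncomputable def comparisonMap : ∀ i, P i →ₗ[R] Q i
  | 0 => liftAlong η ε
  | i + 1 => liftAlong (e i) (comparisonMap i ∘ₗ d i)

variable {d ε e η}

theorem comp_comparisonMap_zero (hη : Surjective η) : η ∘ₗ comparisonMap d ε e η 0 = ε :=
  comp_liftAlong (by rw [range_eq_top.mpr hη]; exact le_top)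

theorem comparisonMap_comm (hη : Surjective η) (hεd : ε ∘ₗ d 0 = 0)
    (hdd : ∀ i, d i ∘ₗ d (i + 1) = 0) (he₀ : Exact (e 0) η)
    (he : ∀ i, Exact (e (i + 1)) (e i)) :
    ∀ i, e i ∘ₗ comparisonMap d ε e η (i + 1) = comparisonMap d ε e η i ∘ₗ d i
  | 0 => comp_liftAlong <| by
      rw [← he₀.linearMap_ker_eq, range_le_ker_iff, ← LinearMap.comp_assoc,
        comp_comparisonMap_zero hη, hεd]
  | i + 1 => comp_liftAlong <| by
      rw [← (he i).linearMap_ker_eq, range_le_ker_iff, ← LinearMap.comp_assoc,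
        comparisonMap_comm hη hεd hdd he₀ he i, LinearMap.comp_assoc, hdd, comp_zero]

theorem exists_chainMap_lift_id (hη : Surjective η) (hεd : ε ∘ₗ d 0 = 0)
    (hdd : ∀ i, d i ∘ₗ d (i + 1) = 0) (he₀ : Exact (e 0) η)
    (he : ∀ i, Exact (e (i + 1)) (e i)) :
    ∃ φ : ∀ i, P i →ₗ[R] Q i, (∀ x, η (φ 0 x) = ε x) ∧ ∀ i x, e i (φ (i + 1) x) = φ i (d i x) :=
  ⟨comparisonMap d ε e η, LinearMap.congr_fun (comp_comparisonMap_zero hη),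
    fun i => LinearMap.congr_fun (comparisonMap_comm hη hεd hdd he₀ he i)⟩

end Comparison

section MappingCone

theorem exists_cone_preimage {R : Type*} [Ring R] {P₂ P₁ P₀ Q₂ Q₁ Q₀ : Type*}
    [AddCommGroup P₂] [Module R P₂] [AddCommGroup P₁] [Module R P₁] [AddCommGroup P₀] [Module R P₀]
    [AddCommGroup Q₂] [Module R Q₂] [AddCommGroup Q₁] [Module R Q₁] [AddCommGroup Q₀] [Module R Q₀]
    {a : P₂ →ₗ[R] P₁} {b : P₁ →ₗ[R] P₀} {c' : Q₂ →ₗ[R] Q₁} {c : Q₁ →ₗ[R] Q₀}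
    {f' : P₂ →ₗ[R] Q₁} {f : P₁ →ₗ[R] Q₀} (hab : Exact a b) (hc : Exact c' c)
    (hf : ∀ x, c (f' x) = f (a x)) {x : P₁} {y : Q₁} (hx : b x = 0) (hxy : f x + c y = 0) :
    ∃ x' y', -a x' = x ∧ f' x' + c' y' = y := by
  obtain ⟨x', rfl⟩ := (hab x).mp hx
  obtain ⟨y', hy'⟩ := (hc (f' x' + y)).mp (by rw [map_add, hf, hxy])
  exact ⟨-x', y', by rw [map_neg, neg_neg], by rw [hy', map_neg, neg_add_cancel_left]⟩

variable {R : Type*} [Ring R] {P Q : ℕ → Type v}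

variable (P Q) in
def mappingCone : ℕ → Type v
  | 0 => Q 0
  | k + 1 => P k × Q (k + 1)

theorem mappingCone.subsingleton {n m : ℕ} (hP : ∀ i, n < i → Subsingleton (P i))
    (hQ : ∀ j, m < j → Subsingleton (Q j)) :
    ∀ k, n + m + 1 < k → Subsingleton (mappingCone P Q k)
  | 0, h => absurd h (Nat.not_lt_zero _)
  | k + 1, h =>
    have := hP k (by omega)
    have := hQ (k + 1) (by omega)
    inferInstanceAs (Subsingleton (P k × Q (k + 1)))

variable [∀ i, AddCommGroup (P i)] [∀ i, Module R (P i)] [∀ i, AddCommGroup (Q i)]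
  [∀ i, Module R (Q i)]

instance mappingCone.instAddCommGroup : ∀ k, AddCommGroup (mappingCone P Q k)
  | 0 => inferInstanceAs (AddCommGroup (Q 0))
  | k + 1 => inferInstanceAs (AddCommGroup (P k × Q (k + 1)))

instance mappingCone.instModule : ∀ k, Module R (mappingCone P Q k)
  | 0 => inferInstanceAs (Module R (Q 0))
  | k + 1 => inferInstanceAs (Module R (P k × Q (k + 1)))

instance mappingCone.instFree [∀ i, Free R (P i)] [∀ i, Free R (Q i)] :
    ∀ k, Free R (mappingCone P Q k)
  | 0 => inferInstanceAs (Free R (Q 0))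
  | k + 1 => inferInstanceAs (Free R (P k × Q (k + 1)))

instance mappingCone.instFinite [∀ i, Module.Finite R (P i)] [∀ i, Module.Finite R (Q i)] :
    ∀ k, Module.Finite R (mappingCone P Q k)
  | 0 => inferInstanceAs (Module.Finite R (Q 0))
  | k + 1 => inferInstanceAs (Module.Finite R (P k × Q (k + 1)))

theorem sum_alternating_finrank_mappingCone [StrongRankCondition R] [∀ i, Free R (P i)]
    [∀ i, Free R (Q i)] [∀ i, Module.Finite R (P i)] [∀ i, Module.Finite R (Q i)] (N : ℕ) :
    ∑ k ∈ Finset.range (N + 1), (-1 : ℤ) ^ k * finrank R (mappingCone P Q k) =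
      ∑ k ∈ Finset.range (N + 1), (-1 : ℤ) ^ k * finrank R (Q k) -
        ∑ k ∈ Finset.range N, (-1 : ℤ) ^ k * finrank R (P k) := by
  have hsucc (k : ℕ) :
      finrank R (mappingCone P Q (k + 1)) = finrank R (P k) + finrank R (Q (k + 1)) :=
    finrank_prod
  have hzero : finrank R (mappingCone P Q 0) = finrank R (Q 0) := rfl
  rw [Finset.sum_range_succ', Finset.sum_range_succ' (fun k => _ * (finrank R (Q k) : ℤ)), hzero,
    add_sub_right_comm, ← Finset.sum_sub_distrib]
  congr 1
  refine Finset.sum_congr rfl fun k _ => ?_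
  rw [hsucc, pow_succ]
  push_cast
  ring

variable (d : ∀ i, P (i + 1) →ₗ[R] P i) (e : ∀ i, Q (i + 1) →ₗ[R] Q i) (φ : ∀ i, P i →ₗ[R] Q i)

def mappingConeD : ∀ k, mappingCone P Q (k + 1) →ₗ[R] mappingCone P Q k
  | 0 => coprod (φ 0) (e 0)
  | k + 1 => (-(d k ∘ₗ fst R _ _)).prod (coprod (φ (k + 1)) (e (k + 1)))

variable {d e φ} {M : Type*} [AddCommGroup M] [Module R M] {ε : P 0 →ₗ[R] M} {η : Q 0 →ₗ[R] M}

theorem mappingConeD_zero_surjective (hε : Surjective ε) (hη : Exact (e 0) η)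
    (hφ₀ : ∀ x, η (φ 0 x) = ε x) : Surjective (mappingConeD d e φ 0) := by
  intro (y : Q 0)
  obtain ⟨x, hx⟩ := hε (η y)
  obtain ⟨y', hy'⟩ := (hη (y - φ 0 x)).mp (by rw [map_sub, hφ₀, hx, sub_self])
  exact ⟨(x, y'), show φ 0 x + e 0 y' = y by rw [hy', add_sub_cancel]⟩

theorem exact_mappingConeD (hε : Exact (d 0) ε) (hd : ∀ i, Exact (d (i + 1)) (d i))
    (hη : Exact (e 0) η) (he : ∀ i, Exact (e (i + 1)) (e i)) (hφ₀ : ∀ x, η (φ 0 x) = ε x)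
    (hφ : ∀ i x, e i (φ (i + 1) x) = φ i (d i x)) :
    ∀ k, Exact (mappingConeD d e φ (k + 1)) (mappingConeD d e φ k)
  | 0 => fun ⟨x, y⟩ => by
    constructor
    · intro hxy
      change φ 0 x + e 0 y = 0 at hxy
      have hx : ε x = 0 := by
        simpa only [map_add, hφ₀, hη.apply_apply_eq_zero, add_zero, map_zero]
          using congrArg η hxy
      obtain ⟨x', y', hx', hy'⟩ := exists_cone_preimage hε (he 0) (hφ 0) hx hxy
      exact ⟨(x', y'), Prod.ext hx' hy'⟩
    · rintro ⟨⟨x', y'⟩, h⟩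
      rw [← h]
      change φ 0 (-d 0 x') + e 0 (φ 1 x' + e 1 y') = 0
      rw [map_add, hφ, (he 0).apply_apply_eq_zero, map_neg, add_zero, neg_add_cancel]
  | k + 1 => fun ⟨x, y⟩ => by
    constructor
    · intro hxy
      change (-d k x, φ (k + 1) x + e (k + 1) y) = 0 at hxy
      obtain ⟨hx, hxy⟩ := Prod.ext_iff.mp hxy
      obtain ⟨x', y', hx', hy'⟩ :=
        exists_cone_preimage (hd k) (he (k + 1)) (hφ (k + 1)) (neg_eq_zero.mp hx) hxy
      exact ⟨(x', y'), Prod.ext hx' hy'⟩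
    · rintro ⟨⟨x', y'⟩, h⟩
      rw [← h]
      change (-d k (-d (k + 1) x'),
        φ (k + 1) (-d (k + 1) x') + e (k + 1) (φ (k + 2) x' + e (k + 2) y')) = 0
      rw [map_neg, (hd k).apply_apply_eq_zero, neg_zero, map_add, hφ,
        (he (k + 1)).apply_apply_eq_zero, map_neg, add_zero, neg_add_cancel, neg_zero]
      rfl

end MappingCone

/-- Two finite free resolutions `0 → F_n → ⋯ → F_0 → M → 0` (with
`F i = R^{r i}`) and `0 → G_m → ⋯ → G_0 → M → 0` (with `G j = R^{s j}`) of the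
same module `M` over a nontrivial commutative ring have equal alternating rank
sums. We set `r i = 0` for `i > n` (resp. `s j = 0` for `j > m`), so the free
modules above the top degree are trivial and exactness everywhere encodes the
finite resolution. -/
theorem stmt_5 {R : Type*} [CommRing R] [Nontrivial R]
    {M : Type*} [AddCommGroup M] [Module R M]
    (n m : ℕ) (r s : ℕ → ℕ)
    (hr : ∀ i, n < i → r i = 0) (hs : ∀ j, m < j → s j = 0)
    (d : ∀ i, (Fin (r (i + 1)) → R) →ₗ[R] (Fin (r i) → R))
    (ε : (Fin (r 0) → R) →ₗ[R] M)
    (hεsurj : Function.Surjective ε)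
    (hε : Function.Exact (d 0) ε)
    (hd : ∀ i, Function.Exact (d (i + 1)) (d i))
    (e : ∀ j, (Fin (s (j + 1)) → R) →ₗ[R] (Fin (s j) → R))
    (η : (Fin (s 0) → R) →ₗ[R] M)
    (hηsurj : Function.Surjective η)
    (hη : Function.Exact (e 0) η)
    (he : ∀ j, Function.Exact (e (j + 1)) (e j)) :
    ∑ i ∈ Finset.range (n + 1), (-1 : ℤ) ^ i * r i =
      ∑ j ∈ Finset.range (m + 1), (-1 : ℤ) ^ j * s j := by
  obtain ⟨φ, hφ₀, hφ⟩ := exists_chainMap_lift_id (P := fun i => Fin (r i) → R)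
    (Q := fun j => Fin (s j) → R) hηsurj hε.linearMap_comp_eq_zero
    (fun i => (hd i).linearMap_comp_eq_zero) hη he
  have hbound := mappingCone.subsingleton (P := fun i => Fin (r i) → R)
    (Q := fun j => Fin (s j) → R) (fun i (hi : n < i) => by simp only [hr i hi]; infer_instance)
    (fun j (hj : m < j) => by simp only [hs j hj]; infer_instance)
  have hχ := sum_alternating_finrank_eq_zero_of_exact (n + m) (mappingConeD d e φ) hbound
    (mappingConeD_zero_surjective hεsurj hη hφ₀) (exact_mappingConeD hε hd hη he hφ₀ hφ)
  rw [sum_alternating_finrank_mappingCone] at hχ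
  simp only [finrank_fin_fun] at hχ
  rw [Finset.eventually_constant_sum (fun i hi => by simp [hr i hi])
      (by omega : n + 1 ≤ n + m + 1),
    Finset.eventually_constant_sum (fun j hj => by simp [hs j hj])
      (by omega : m + 1 ≤ n + m + 2)] at hχ
  linarith
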